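/- arXiv:2201.09545 — 2 statements merged into one kernel-verified Lean document; each statement's English description precedes it below -/
import Mathlib

section
/- Let κ ≥ 2 be an integer and x, y real numbers with U_{κ-1}(x) ≠ 0 and U_{κ-1}(y) ≠ 0. Then T_κ(x) = T_κ(y) if and only if for all positive integers α, β one has U_{ακ-1}(x)·U_{βκ-1}(y) = U_{ακ-1}(y)·U_{βκ-1}(x). -/
/-!
Since `U_{nκ-1} = U_{n-1}(T_κ) · U_{κ-1}` (at `x = cos θ` this is
`sin(nκθ)/sin θ = (sin(nκθ)/sin(κθ)) · (sin(κθ)/sin θ)`), the factor `U_{κ-1}` cancels from both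
sides of the commutation relation, which then only depends on the values `T_κ(x)` and `T_κ(y)`.
Conversely, the relation for `α = 2, β = 1` reads `2 T_κ(x) = 2 T_κ(y)` after that cancellation,
because `U_1 = 2X` and `U_0 = 1`.
-/

open Polynomial Polynomial.Chebyshev

namespace Polynomial.Chebyshev

variable (R : Type*) [CommRing R]

theorem T_mul_U (m k : ℤ) : 2 * T R m * U R k = U R (k + m) + U R (k - m) := by
  induction m using Polynomial.Chebyshev.induct with
  | zero => simp [two_mul]
  | one => rw [T_one, U_add_one]; ring
  | add_two m ih1 ih2 =>
    have h₁ := U_add_two R (k + m)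
    have h₂ := U_sub_two R (k - m)
    have h₃ := T_add_two R m
    linear_combination (norm := ring_nf) 2 * U R k * h₃ - h₂ - h₁ - ih2 + 2 * (X : R[X]) * ih1
  | neg_add_one m ih1 ih2 =>
    have h₁ := U_add_two R (k + (-m - 1))
    have h₂ := U_sub_two R (k - (-m - 1))
    have h₃ := T_add_two R (-m - 1)
    linear_combination (norm := ring_nf) 2 * U R k * h₃ - h₂ - h₁ - ih2 + 2 * (X : R[X]) * ih1

theorem U_mul_sub_one (n κ : ℤ) : U R (n * κ - 1) = (U R (n - 1)).comp (T R κ) * U R (κ - 1) := by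
  induction n using Polynomial.Chebyshev.induct with
  | zero => simp
  | one => simp
  | add_two n ih1 ih2 =>
    have h₁ := T_mul_U R κ ((n + 1) * κ - 1)
    have h₂ := congr_arg (comp · (T R κ)) <| U_add_two R (n - 1)
    simp only [sub_comp, mul_comp, ofNat_comp, X_comp] at h₂
    linear_combination (norm := ring_nf) -h₁ + 2 * T R κ * ih1 - ih2 - U R (κ - 1) * h₂
  | neg_add_one n ih1 ih2 =>
    have h₁ := T_mul_U R κ (-n * κ - 1)
    have h₂ := congr_arg (comp · (T R κ)) <| U_add_two R (-n - 2)
    simp only [sub_comp, mul_comp, ofNat_comp, X_comp] at h₂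
    linear_combination (norm := ring_nf) -h₁ + 2 * T R κ * ih1 - ih2 - U R (κ - 1) * h₂

variable {R}

theorem U_mul_sub_one_eval (n κ : ℤ) (x : R) :
    (U R (n * κ - 1)).eval x = (U R (n - 1)).eval ((T R κ).eval x) * (U R (κ - 1)).eval x := by
  rw [U_mul_sub_one, eval_mul, eval_comp]

end Polynomial.Chebyshev

theorem chebyshev_T_eq_iff_U_comm_general (κ : ℕ) (x y : ℝ)
    (hx : (U ℝ ((κ : ℤ) - 1)).eval x ≠ 0) (hy : (U ℝ ((κ : ℤ) - 1)).eval y ≠ 0) :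
    (T ℝ κ).eval x = (T ℝ κ).eval y ↔
      ∀ α β : ℕ, 0 < α → 0 < β →
        (U ℝ ((α * κ : ℕ) - 1 : ℤ)).eval x * (U ℝ ((β * κ : ℕ) - 1 : ℤ)).eval y =
          (U ℝ ((α * κ : ℕ) - 1 : ℤ)).eval y * (U ℝ ((β * κ : ℕ) - 1 : ℤ)).eval x := by
  simp only [Nat.cast_mul, U_mul_sub_one_eval]
  constructor
  · intro h α β _ _
    rw [h]
    ring
  · intro h
    have h21 := h 2 1 two_pos one_pos
    norm_num only [Nat.cast_ofNat, Nat.cast_one, sub_self, U_zero, U_one, eval_one, eval_mul,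
      eval_ofNat, eval_X, one_mul, mul_one] at h21
    refine mul_right_cancel₀ (mul_ne_zero (mul_ne_zero two_ne_zero hx) hy) ?_
    linear_combination h21

/-- For `κ ≥ 2` and real `x, y` with `U_{κ-1}(x) ≠ 0 ≠ U_{κ-1}(y)`,
`T_κ(x) = T_κ(y)` iff `U_{ακ-1}(x)·U_{βκ-1}(y) = U_{ακ-1}(y)·U_{βκ-1}(x)`
for all positive integers `α, β`. -/
theorem chebyshev_T_eq_iff_U_comm (κ : ℕ) (hκ : 2 ≤ κ) (x y : ℝ)
    (hx : (U ℝ ((κ : ℤ) - 1)).eval x ≠ 0) (hy : (U ℝ ((κ : ℤ) - 1)).eval y ≠ 0) :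
    (T ℝ κ).eval x = (T ℝ κ).eval y ↔
      ∀ α β : ℕ, 0 < α → 0 < β →
        (U ℝ ((α * κ : ℕ) - 1 : ℤ)).eval x * (U ℝ ((β * κ : ℕ) - 1 : ℤ)).eval y =
          (U ℝ ((α * κ : ℕ) - 1 : ℤ)).eval y * (U ℝ ((β * κ : ℕ) - 1 : ℤ)).eval x :=
  chebyshev_T_eq_iff_U_comm_general κ x y hx hy
end

section
/- For κ = 2 and E ∈ (2/3, 1), the polynomial G(x) := (1-x²)U_1(x) + (1-(E-x)²)U_1(E-x) + (9/14)·[(1-x²)U_3(x) + (1-(E-x)²)U_3(E-x)] is strictly positive for all x ∈ [E-1, 1], where U_1(x) = 2x and U_3(x) = 8x³ - 4x are Chebyshev polynomials of the second kind. -/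
/-!
The coefficient `9/14` makes the Chebyshev combination factor nicely:
`(1 - t²)(U₁(t) + (9/14) U₃(t)) = (4/7) t (1 - t²)(9t² - 1)`.
Writing `y = E - x`, the constraint `x ∈ [E - 1, 1]` says exactly that `x, y ≤ 1`, so `G` is
`4/7` times the symmetric sum `φ(x) + φ(y)` with `φ(t) = t (1 - t²)(9t² - 1)`. On `(-1/3, 1]` the
function `φ` is negative only on `(0, 1/3)`, and `x + y > 2/3` keeps `x` and `y` from both lying
there; the quantitative version of this is an explicit Positivstellensatz certificate.
-/

open Polynomial Polynomial.Chebyshev Set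

theorem Polynomial.Chebyshev.U_three (R : Type*) [CommRing R] : U R 3 = 8 * X ^ 3 - 4 * X := by
  rw [show (3 : ℤ) = 2 + 1 by norm_num, U_add_one, U_two]
  norm_num [U_one]
  ring

def mourreSymbol {R : Type*} [Ring R] (t : R) : R := t * (1 - t ^ 2) * (9 * t ^ 2 - 1)

theorem one_sub_sq_mul_U_one_add_U_three {R : Type*} [Field R] [CharZero R] (t : R) :
    (1 - t ^ 2) * ((U R 1).eval t + 9 / 14 * (U R 3).eval t) = 4 / 7 * mourreSymbol t := by
  simp only [U_one, U_three, mourreSymbol, eval_sub, eval_mul, eval_pow, eval_X, eval_ofNat]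
  ring

theorem mourreSymbol_add_pos {R : Type*} [Field R] [LinearOrder R] [IsStrictOrderedRing R]
    {x y : R} (hx : x ≤ 1) (hy : y ≤ 1) (hxy : x + y ∈ Ioo (2 / 3) 1) :
    0 < mourreSymbol x + mourreSymbol y := by
  have ha : 0 ≤ 1 - x := by linarith
  have hb : 0 ≤ 1 - y := by linarith
  have hc : 0 < x + y - 2 / 3 := by linarith [hxy.1]
  have hd : 0 < 1 - (x + y) := by linarith [hxy.2]
  unfold mourreSymbol
  -- a nonnegative combination of products of the four constraints and squares, one term strict
  linarith [mul_nonneg (mul_nonneg (sq_nonneg (1 - x)) (sq_nonneg (x + y - 2 / 3))) hd.le,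
    mul_nonneg (mul_nonneg ha hb) (mul_nonneg hc.le (sq_nonneg (x + 1 / 3))),
    mul_nonneg ha (mul_nonneg (sq_nonneg (1 - y)) (sq_nonneg (x + y - 2 / 3))),
    mul_nonneg (mul_nonneg ha hb) (sq_nonneg (x - y)),
    mul_nonneg (mul_nonneg hb hc.le) (mul_nonneg hd.le (sq_nonneg (x + 1 / 3))),
    mul_nonneg (mul_nonneg (sq_nonneg (1 - y)) (sq_nonneg (x + y - 2 / 3))) hd.le,
    mul_nonneg (mul_nonneg (sq_nonneg (1 - x)) hb) (sq_nonneg (x + y - 2 / 3)),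
    mul_nonneg (pow_nonneg ha 3) (mul_nonneg hc.le hd.le),
    mul_nonneg (mul_nonneg ha hb) (mul_nonneg hc.le (sq_nonneg (x - y))),
    mul_nonneg (mul_nonneg ha hb) (pow_nonneg hc.le 3),
    mul_nonneg hc.le (mul_nonneg (sq_nonneg (1 - (x + y))) (sq_nonneg (x + 1 / 3))),
    mul_pos (pow_pos hc 4) hd,
    mul_nonneg ha (mul_nonneg (sq_nonneg (x + y - 2 / 3)) (sq_nonneg (1 - (x + y)))),
    mul_nonneg (pow_nonneg ha 3) (mul_nonneg hb hc.le)]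

/-- Mourre estimate for `κ = 2`, `d = 2` on the band `(2/3, 1)`: the function
`G(x) = (1-x²)U₁(x) + (1-(E-x)²)U₁(E-x) + (9/14)[(1-x²)U₃(x) + (1-(E-x)²)U₃(E-x)]`
is strictly positive on `[E-1, 1]` for every `E ∈ (2/3, 1)`. -/
theorem mourre_band_kappa_two (E : ℝ) (hE : E ∈ Ioo (2 / 3 : ℝ) 1) (x : ℝ)
    (hx : x ∈ Icc (E - 1) 1) :
    0 < (1 - x ^ 2) * (U ℝ 1).eval x + (1 - (E - x) ^ 2) * (U ℝ 1).eval (E - x) +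
        (9 / 14) * ((1 - x ^ 2) * (U ℝ 3).eval x +
          (1 - (E - x) ^ 2) * (U ℝ 3).eval (E - x)) := by
  have hpos : 0 < mourreSymbol x + mourreSymbol (E - x) :=
    mourreSymbol_add_pos hx.2 (by linarith [hx.1]) (by simpa using hE)
  linear_combination (4 / 7) * hpos - one_sub_sq_mul_U_one_add_U_three x -
    one_sub_sq_mul_U_one_add_U_three (E - x)
end
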